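/- arXiv:1908.09826 — 4 statements merged into one kernel-verified Lean document; each statement's English description precedes it below -/
import Mathlib

section
/- Let P, K_i, K_j be positive integers and a ≥ 1 a real scalar with ⌈a·K_i⌉ + K_j ≤ P. Then C(P - ⌈a·K_i⌉, K_j)/C(P, K_j) ≤ (C(P - K_i, K_j)/C(P, K_j))^a. -/
open Finset

/-! Since `C(P - t, K_j) / C(P, K_j) = ∏_{j < K_j} (1 - t / (P - j))`, it suffices to compare the
factors: with `c = P - j`, Bernoulli's inequality gives
`1 - ⌈a K_i⌉ / c ≤ 1 - a K_i / c ≤ (1 - K_i / c) ^ a`, and `∏ x_j ^ a = (∏ x_j) ^ a`. -/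

theorem Nat.cast_descFactorial_eq_prod_range {R : Type*} [CommRing R] (n k : ℕ) :
    (n.descFactorial k : R) = ∏ j ∈ range k, ((n : R) - j) := by
  rw [← descPochhammer_eval_eq_descFactorial, descPochhammer_eval_eq_prod_range]

theorem Nat.choose_sub_div_choose_eq_prod {n t k : ℕ} (h : t ≤ n) :
    ((n - t).choose k : ℝ) / n.choose k = ∏ j ∈ range k, (((n : ℝ) - j - t) / ((n : ℝ) - j)) := by
  have hchoose (m : ℕ) : (m.choose k : ℝ) = m.descFactorial k / k.factorial := by
    rw [Nat.descFactorial_eq_factorial_mul_choose, Nat.cast_mul]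
    field_simp
  rw [hchoose, hchoose, div_div_div_cancel_right₀ (by positivity),
    Nat.cast_descFactorial_eq_prod_range, Nat.cast_descFactorial_eq_prod_range, Nat.cast_sub h,
    ← prod_div_distrib]
  exact prod_congr rfl fun j _ => by rw [sub_right_comm]

theorem one_sub_div_le_rpow_one_sub_div {c k m a : ℝ} (hc : 0 < c) (hk : 0 ≤ k) (ha : 1 ≤ a)
    (hm : a * k ≤ m) (hmc : m ≤ c) : (c - m) / c ≤ ((c - k) / c) ^ a := by
  have hkc : k ≤ c := by nlinarith
  calc (c - m) / c ≤ 1 + a * -(k / c) := by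
        rw [sub_div, div_self hc.ne', mul_neg, ← sub_eq_add_neg, mul_div_assoc']
        gcongr
    _ ≤ (1 + -(k / c)) ^ a :=
        one_add_mul_self_le_rpow_one_add (by rw [neg_le_neg_iff, div_le_one hc]; exact hkc) ha
    _ = ((c - k) / c) ^ a := by rw [sub_div, div_self hc.ne', sub_eq_add_neg]

theorem stmt_6_general (P Ki Kj : ℕ)
    (a : ℝ) (ha : 1 ≤ a) (h : ⌈a * (Ki : ℝ)⌉₊ + Kj ≤ P) :
    ((P - ⌈a * (Ki : ℝ)⌉₊).choose Kj : ℝ) / (P.choose Kj : ℝ)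
      ≤ (((P - Ki).choose Kj : ℝ) / (P.choose Kj : ℝ)) ^ a := by
  set m := ⌈a * (Ki : ℝ)⌉₊
  have hKim : Ki ≤ m := (Nat.cast_le (α := ℝ)).1 <|
    (le_mul_of_one_le_left (Nat.cast_nonneg _) ha).trans (Nat.le_ceil _)
  have hlt {t j : ℕ} (ht : t ≤ m) (hj : j ∈ range Kj) : (t : ℝ) < P - j := by
    rw [mem_range] at hj
    rw [lt_sub_iff_add_lt', ← Nat.cast_add, Nat.cast_lt]
    omega
  have hpos {j : ℕ} (hj : j ∈ range Kj) : 0 < (P : ℝ) - j :=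
    (Nat.cast_nonneg m).trans_lt (hlt le_rfl hj)
  rw [Nat.choose_sub_div_choose_eq_prod (by omega), Nat.choose_sub_div_choose_eq_prod (by omega),
    ← Real.finsetProd_rpow _ _ fun j hj => div_nonneg (sub_nonneg.2 (hlt hKim hj).le) (hpos hj).le]
  refine prod_le_prod (fun j hj => div_nonneg (sub_nonneg.2 (hlt le_rfl hj).le) (hpos hj).le)
    fun j hj => one_sub_div_le_rpow_one_sub_div (hpos hj) (Nat.cast_nonneg _) ha (Nat.le_ceil _)
      (hlt le_rfl hj).le

/-- C(P-⌈aK_i⌉, K_j)/C(P,K_j) ≤ (C(P-K_i,K_j)/C(P,K_j))^a for real a ≥ 1. -/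
theorem stmt_6 (P Ki Kj : ℕ) (hP : 0 < P) (hKi : 0 < Ki) (hKj : 0 < Kj)
    (a : ℝ) (ha : 1 ≤ a) (h : ⌈a * (Ki : ℝ)⌉₊ + Kj ≤ P) :
    ((P - ⌈a * (Ki : ℝ)⌉₊).choose Kj : ℝ) / (P.choose Kj : ℝ)
      ≤ (((P - Ki).choose Kj : ℝ) / (P.choose Kj : ℝ)) ^ a :=
  stmt_6_general P Ki Kj a ha h
end

section
/- Let P, K₁, K₂ be positive integers with K₁ + K₂ ≤ P. Then C(P-K₁, K₂)/C(P, K₂) ≤ e^{-K₁K₂/P}. -/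
/-! Written as `C(P-K₁,K₂)/C(P,K₂) = ∏_{i<K₂} (P-K₁-i)/(P-i)`, the ratio is a product of `K₂`
factors, each at most `(P-K₁)/P = 1 - K₁/P ≤ e^{-K₁/P}`. -/

namespace Nat

theorem sub_sub_mul_le_sub_mul_sub (n m k : ℕ) : (n - m - k) * n ≤ (n - m) * (n - k) := by
  rcases le_or_gt (m + k) n with hmk | hmk
  · zify [hmk, (by omega : m ≤ n), (by omega : k ≤ n), (by omega : k ≤ n - m)]
    nlinarith [Int.natCast_nonneg m, Int.natCast_nonneg k]
  · simp [show n - m - k = 0 by omega]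

theorem descFactorial_sub_mul_pow_le (n m k : ℕ) :
    (n - m).descFactorial k * n ^ k ≤ (n - m) ^ k * n.descFactorial k := by
  induction k with
  | zero => simp
  | succ k ih =>
    rw [descFactorial_succ, descFactorial_succ, pow_succ, pow_succ]
    calc (n - m - k) * (n - m).descFactorial k * (n ^ k * n)
        = ((n - m - k) * n) * ((n - m).descFactorial k * n ^ k) := by ring
      _ ≤ ((n - m) * (n - k)) * ((n - m) ^ k * n.descFactorial k) :=
          Nat.mul_le_mul (sub_sub_mul_le_sub_mul_sub n m k) ih
      _ = (n - m) ^ k * (n - m) * ((n - k) * n.descFactorial k) := by ring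

theorem choose_sub_mul_pow_le (n m k : ℕ) :
    (n - m).choose k * n ^ k ≤ (n - m) ^ k * n.choose k := by
  have h := descFactorial_sub_mul_pow_le n m k
  rw [descFactorial_eq_factorial_mul_choose, descFactorial_eq_factorial_mul_choose,
    mul_assoc, mul_left_comm _ k !] at h
  exact Nat.le_of_mul_le_mul_left h (factorial_pos k)

theorem cast_choose_sub_div_choose_le_pow {n k : ℕ} (m : ℕ) (hn : 0 < n) (hk : k ≤ n) :
    ((n - m).choose k : ℝ) / n.choose k ≤ (((n - m : ℕ) : ℝ) / n) ^ k := by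
  have hchoose : (0 : ℝ) < n.choose k := by exact_mod_cast choose_pos hk
  have hpow : (0 : ℝ) < (n : ℝ) ^ k := by positivity
  rw [div_pow, div_le_div_iff₀ hchoose hpow]
  exact_mod_cast choose_sub_mul_pow_le n m k

end Nat

theorem stmt_7_general (P K₁ K₂ : ℕ) (hP : 0 < P)
    (h : K₁ + K₂ ≤ P) :
    ((P - K₁).choose K₂ : ℝ) / (P.choose K₂ : ℝ)
      ≤ Real.exp (-((K₁ : ℝ) * K₂ / P)) := by
  have hbase : ((P - K₁ : ℕ) : ℝ) / P ≤ Real.exp (-(K₁ / P)) := by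
    rw [Nat.cast_sub (by omega), sub_div, div_self (by positivity)]
    exact Real.one_sub_le_exp_neg _
  calc ((P - K₁).choose K₂ : ℝ) / P.choose K₂
      ≤ (((P - K₁ : ℕ) : ℝ) / P) ^ K₂ := Nat.cast_choose_sub_div_choose_le_pow K₁ hP (by omega)
    _ ≤ Real.exp (-(K₁ / P)) ^ K₂ := pow_le_pow_left₀ (by positivity) hbase K₂
    _ = Real.exp (-((K₁ : ℝ) * K₂ / P)) := by rw [← Real.exp_nat_mul]; ring_nf

/-- C(P-K₁,K₂)/C(P,K₂) ≤ e^{-K₁K₂/P}. -/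
theorem stmt_7 (P K₁ K₂ : ℕ) (hP : 0 < P) (hK₁ : 0 < K₁) (hK₂ : 0 < K₂)
    (h : K₁ + K₂ ≤ P) :
    ((P - K₁).choose K₂ : ℝ) / (P.choose K₂ : ℝ)
      ≤ Real.exp (-((K₁ : ℝ) * K₂ / P)) :=
  stmt_7_general P K₁ K₂ hP h
end

section
/- Let P, K₁, K₂ be positive integers with 2·K₂ ≤ P and K₁ ≤ K₂. Define p = 1 - C(P-K₁,K₂)/C(P,K₂). If p ≤ 1/2, then p ≥ K₁K₂/(2P). -/
/-!
Removing `m` elements from an `n`-set multiplies the number of `k`-subsets by at most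
`(1 - k/n)^m`, so with `x = K₂/P` and `y = K₁ x` the probability of disjointness is
`1 - p ≤ (1 - x)^K₁ ≤ (1 + y)⁻¹`, since `(1 - x)^K₁ (1 + y) ≤ (1 - x)^K₁ (1 + x)^K₁ ≤ 1`.
Hence `p ≥ y / (1 + y)`; the hypothesis `p ≤ 1/2` forces `y ≤ 1`, and then `y / (1 + y) ≥ y / 2`.
-/

namespace Nat

theorem cast_choose_eq_one_sub_div_mul_choose_succ (j k : ℕ) :
    (j.choose k : ℝ) = (1 - k / (j + 1)) * (j + 1).choose k := by
  rcases le_or_gt k (j + 1) with hk | hk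
  · have h := congrArg (Nat.cast : ℕ → ℝ) (choose_mul_succ_eq j k)
    push_cast [Nat.cast_sub hk] at h
    field_simp
    linarith
  · simp [choose_eq_zero_of_lt hk, choose_eq_zero_of_lt (lt_of_succ_lt hk)]

theorem cast_choose_pred_le {n j : ℕ} (k : ℕ) (hj : j ≤ n) :
    ((j - 1).choose k : ℝ) ≤ (1 - k / n) * j.choose k := by
  cases j with
  | zero => cases k <;> simp
  | succ j =>
    rw [succ_sub_one, cast_choose_eq_one_sub_div_mul_choose_succ]
    gcongr
    exact_mod_cast hj

theorem cast_choose_sub_le_one_sub_div_pow_mul {n k : ℕ} (hk : k ≤ n) (m : ℕ) :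
    ((n - m).choose k : ℝ) ≤ (1 - k / n) ^ m * n.choose k := by
  have hx : 0 ≤ 1 - (k : ℝ) / n :=
    sub_nonneg.2 (div_le_one_of_le₀ (by exact_mod_cast hk) n.cast_nonneg)
  induction m with
  | zero => simp
  | succ m ih =>
    calc ((n - (m + 1)).choose k : ℝ) ≤ (1 - k / n) * (n - m).choose k := by
          rw [Nat.sub_succ]; exact cast_choose_pred_le k (sub_le n m)
      _ ≤ (1 - k / n) * ((1 - k / n) ^ m * n.choose k) := by gcongr
      _ = (1 - k / n) ^ (m + 1) * n.choose k := by ring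

end Nat

theorem one_sub_pow_le_inv_one_add_mul {x : ℝ} (hx0 : 0 ≤ x) (hx1 : x ≤ 1) (m : ℕ) :
    (1 - x) ^ m ≤ (1 + m * x)⁻¹ := by
  have hpos : 0 < 1 + m * x := by positivity
  have h1x : 0 ≤ 1 - x := sub_nonneg.2 hx1
  rw [← one_div, le_div_iff₀ hpos]
  calc (1 - x) ^ m * (1 + m * x) ≤ (1 - x) ^ m * (1 + x) ^ m := by
        gcongr; exact one_add_mul_le_pow (by linarith) m
    _ = (1 - x ^ 2) ^ m := by rw [← mul_pow]; ring
    _ ≤ 1 := pow_le_one₀ (by nlinarith) (by nlinarith)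

theorem stmt_8_general (P K₁ K₂ : ℕ)
    (h2 : 2 * K₂ ≤ P)
    (p : ℝ) (hp : p = 1 - ((P - K₁).choose K₂ : ℝ) / (P.choose K₂ : ℝ))
    (hphalf : p ≤ 1 / 2) :
    (K₁ : ℝ) * K₂ / (2 * P) ≤ p := by
  set x : ℝ := K₂ / P
  set y : ℝ := K₁ * x
  have hKP : K₂ ≤ P := by omega
  have hx1 : x ≤ 1 := div_le_one_of_le₀ (by exact_mod_cast hKP) P.cast_nonneg
  have hy : 0 ≤ y := by positivity
  have hdisjoint : ((P - K₁).choose K₂ : ℝ) / P.choose K₂ ≤ (1 + y)⁻¹ :=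
    (div_le_of_le_mul₀ (by positivity) (by positivity)
      (Nat.cast_choose_sub_le_one_sub_div_pow_mul hKP K₁)).trans
    (one_sub_pow_le_inv_one_add_mul (by positivity) hx1 K₁)
  have hp_ge : y / (1 + y) ≤ p := by
    rw [hp, show y / (1 + y) = 1 - (1 + y)⁻¹ by field_simp; ring]; linarith
  have hy1 : y ≤ 1 := by
    rw [div_le_iff₀ (by positivity)] at hp_ge; nlinarith
  calc (K₁ : ℝ) * K₂ / (2 * P) = y / 2 := by ring
    _ ≤ y / (1 + y) := by gcongr; linarith
    _ ≤ p := hp_ge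

/-- If p = 1 - C(P-K₁,K₂)/C(P,K₂) ≤ 1/2 (with 2K₂ ≤ P, K₁ ≤ K₂), then
p ≥ K₁K₂/(2P). -/
theorem stmt_8 (P K₁ K₂ : ℕ) (hP : 0 < P) (hK₁ : 0 < K₁) (hK₂ : 0 < K₂)
    (h2 : 2 * K₂ ≤ P) (h12 : K₁ ≤ K₂)
    (p : ℝ) (hp : p = 1 - ((P - K₁).choose K₂ : ℝ) / (P.choose K₂ : ℝ))
    (hphalf : p ≤ 1 / 2) :
    (K₁ : ℝ) * K₂ / (2 * P) ≤ p :=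
  stmt_8_general P K₁ K₂ h2 p hp hphalf
end

section
/- Let P, K₁, K_r be positive integers with K₁ ≤ K_r ≤ P/2, and let p₁ᵣ = 1 - C(P-K₁,K_r)/C(P,K_r) and p_rr = 1 - C(P-K_r,K_r)/C(P,K_r). Then p_rr ≤ max(2, 4·K_r/K₁) · p₁ᵣ. -/
/-! If `p₁ᵣ > 1/2` then `p_rr ≤ 1 < 2 p₁ᵣ`. Otherwise the union bound gives
`p_rr ≤ K_r² / P`, while the key rings meeting the `K₁` marked elements in exactly one
of them give `p₁ᵣ ≥ (K₁ K_r / P) (1 - p₁ᵣ) ≥ K₁ K_r / (2P)`. -/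

namespace Nat

theorem choose_add_le_choose_add_mul (n m k : ℕ) :
    (n + m).choose (k + 1) ≤ n.choose (k + 1) + m * (n + m - 1).choose k := by
  induction m with
  | zero => simp
  | succ m ih =>
    have hmono : (n + m - 1).choose k ≤ (n + m).choose k := choose_le_choose k (by omega)
    calc (n + (m + 1)).choose (k + 1) = (n + m).choose k + (n + m).choose (k + 1) :=
          choose_succ_succ _ _
      _ ≤ (n + m).choose k + (n.choose (k + 1) + m * (n + m).choose k) :=
          Nat.add_le_add_left (ih.trans (Nat.add_le_add_left (Nat.mul_le_mul_left m hmono) _)) _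
      _ = n.choose (k + 1) + (m + 1) * (n + (m + 1) - 1).choose k := by
          rw [show n + (m + 1) - 1 = n + m by omega]; ring

theorem choose_add_mul_le_choose_add (n m k : ℕ) :
    n.choose (k + 1) + m * n.choose k ≤ (n + m).choose (k + 1) := by
  induction m with
  | zero => simp
  | succ m ih =>
    have hmono : n.choose k ≤ (n + m).choose k := choose_le_choose k (by omega)
    calc n.choose (k + 1) + (m + 1) * n.choose k
        = n.choose k + (n.choose (k + 1) + m * n.choose k) := by ring
      _ ≤ (n + m).choose k + (n + m).choose (k + 1) := add_le_add hmono ih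
      _ = (n + (m + 1)).choose (k + 1) := (choose_succ_succ _ _).symm

end Nat

/-- The probability that a uniformly random `b`-subset of a `P`-set meets a fixed `a`-subset. -/
noncomputable def intersectProb (P a b : ℕ) : ℝ :=
  1 - ((P - a).choose b : ℝ) / (P.choose b : ℝ)

section intersectProb

variable {P m K : ℕ}

theorem intersectProb_le_one : intersectProb P m K ≤ 1 := by
  unfold intersectProb
  have : (0 : ℝ) ≤ ((P - m).choose K : ℝ) / (P.choose K : ℝ) := by positivity
  linarith

/-- Union bound over the `m` marked elements. -/
theorem intersectProb_le (hK : 0 < K) (hKP : K ≤ P) (hm : m ≤ P) :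
    intersectProb P m K ≤ m * K / P := by
  obtain ⟨k, rfl⟩ : ∃ k, K = k + 1 := ⟨K - 1, by omega⟩
  have hunion := Nat.choose_add_le_choose_add_mul (P - m) m k
  rw [Nat.sub_add_cancel hm] at hunion
  have hpascal := Nat.add_one_mul_choose_eq (P - 1) k
  rw [Nat.sub_add_cancel (by omega)] at hpascal
  have hN : (0 : ℝ) < P.choose (k + 1) := by exact_mod_cast Nat.choose_pos hKP
  have hP : (0 : ℝ) < P := by exact_mod_cast (show 0 < P by omega)
  have hunion' : (P.choose (k + 1) : ℝ) ≤ (P - m).choose (k + 1) + m * (P - 1).choose k := by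
    exact_mod_cast hunion
  have hpascal' : (P : ℝ) * (P - 1).choose k = P.choose (k + 1) * (k + 1) := by
    exact_mod_cast hpascal
  unfold intersectProb
  rw [one_sub_div hN.ne', div_le_div_iff₀ hN hP]
  push_cast
  nlinarith [mul_le_mul_of_nonneg_right (sub_le_iff_le_add'.mpr hunion') hP.le]

theorem mul_one_sub_intersectProb_le (hK : 0 < K) (hKP : K ≤ P) (hm : m ≤ P) :
    m * K / P * (1 - intersectProb P m K) ≤ intersectProb P m K := by
  obtain ⟨k, rfl⟩ : ∃ k, K = k + 1 := ⟨K - 1, by omega⟩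
  have hlower := Nat.choose_add_mul_le_choose_add (P - m) m k
  rw [Nat.sub_add_cancel hm] at hlower
  have hratio : (P - m).choose (k + 1) * (k + 1) ≤ (P - m).choose k * P := by
    rw [Nat.choose_succ_right_eq]
    exact Nat.mul_le_mul le_rfl (by omega)
  have hN : (0 : ℝ) < P.choose (k + 1) := by exact_mod_cast Nat.choose_pos hKP
  have hP : (0 : ℝ) < P := by exact_mod_cast (show 0 < P by omega)
  have hlower' : ((P - m).choose (k + 1) : ℝ) + m * (P - m).choose k ≤ P.choose (k + 1) := by
    exact_mod_cast hlower
  have hratio' : ((P - m).choose (k + 1) : ℝ) * (k + 1) ≤ (P - m).choose k * P := by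
    exact_mod_cast hratio
  unfold intersectProb
  rw [sub_sub_cancel, one_sub_div hN.ne', div_mul_div_comm, div_le_div_iff₀ (by positivity) hN]
  push_cast
  have key : (m : ℝ) * (k + 1) * (P - m).choose (k + 1)
      ≤ (P.choose (k + 1) - (P - m).choose (k + 1)) * P := by
    nlinarith [mul_le_mul_of_nonneg_left hratio' (Nat.cast_nonneg m : (0 : ℝ) ≤ m),
      mul_le_mul_of_nonneg_right (le_sub_iff_add_le'.mpr hlower') hP.le]
  nlinarith [mul_le_mul_of_nonneg_right key hN.le]

theorem mul_div_two_le_intersectProb (hK : 0 < K) (hKP : K ≤ P) (hm : m ≤ P)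
    (hhalf : intersectProb P m K ≤ 1 / 2) :
    m * K / (2 * P) ≤ intersectProb P m K := by
  calc (m * K / (2 * P) : ℝ) = m * K / P * (1 / 2) := by ring
    _ ≤ m * K / P * (1 - intersectProb P m K) := by gcongr; linarith
    _ ≤ intersectProb P m K := mul_one_sub_intersectProb_le hK hKP hm

end intersectProb

theorem stmt_9_general (P K₁ Kr : ℕ) (hK₁ : 0 < K₁) (hKr : 0 < Kr)
    (h1r : K₁ ≤ Kr) (hrP : 2 * Kr ≤ P)
    (p1r prr : ℝ)
    (hp1r : p1r = 1 - ((P - K₁).choose Kr : ℝ) / (P.choose Kr : ℝ))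
    (hprr : prr = 1 - ((P - Kr).choose Kr : ℝ) / (P.choose Kr : ℝ)) :
    prr ≤ max 2 (4 * (Kr : ℝ) / K₁) * p1r := by
  change p1r = intersectProb P K₁ Kr at hp1r
  change prr = intersectProb P Kr Kr at hprr
  subst hp1r hprr
  rcases le_or_gt (intersectProb P K₁ Kr) (1 / 2) with hsmall | hlarge
  · have hlow := mul_div_two_le_intersectProb hKr (by omega) (by omega) hsmall
    have hK₁' : (0 : ℝ) < K₁ := by exact_mod_cast hK₁
    calc intersectProb P Kr Kr ≤ Kr * Kr / P := intersectProb_le hKr (by omega) (by omega)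
      _ = 2 * Kr / K₁ * (K₁ * Kr / (2 * P)) := by field_simp
      _ ≤ 4 * Kr / K₁ * intersectProb P K₁ Kr := by
          gcongr
          norm_num
      _ ≤ _ := by gcongr; exacts [le_trans (by positivity) hlow, le_max_right _ _]
  · calc intersectProb P Kr Kr ≤ 1 := intersectProb_le_one
      _ ≤ 2 * intersectProb P K₁ Kr := by linarith
      _ ≤ _ := by gcongr; exact le_max_left _ _

/-- p_rr ≤ max(2, 4·K_r/K₁) · p₁ᵣ. -/
theorem stmt_9 (P K₁ Kr : ℕ) (hP : 0 < P) (hK₁ : 0 < K₁) (hKr : 0 < Kr)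
    (h1r : K₁ ≤ Kr) (hrP : 2 * Kr ≤ P)
    (p1r prr : ℝ)
    (hp1r : p1r = 1 - ((P - K₁).choose Kr : ℝ) / (P.choose Kr : ℝ))
    (hprr : prr = 1 - ((P - Kr).choose Kr : ℝ) / (P.choose Kr : ℝ)) :
    prr ≤ max 2 (4 * (Kr : ℝ) / K₁) * p1r :=
  stmt_9_general P K₁ Kr hK₁ hKr h1r hrP p1r prr hp1r hprr
end
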